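/- Let K be a field with a valuation v : K → ℤₘ₀, with valuation ring 𝒪 = {x ∈ K : v x ≤ 1}. Let d, π, and 2 = 1+1 ∈ K satisfy v d = 1, v 2 = 1, and v π = Multiplicative.ofAdd (−1) (π a uniformizer). Let ψ : K → ℂ be an additive character such that ψ(x) = 1 whenever v x ≤ 1, and such that ψ(a) ≠ 1 for some a ∈ K with v a = Multiplicative.ofAdd (1). In the quaternion algebra ℍ[K, d, π], let Λ := 𝒪·1 + 𝒪·i + 𝒪·j + 𝒪·k (the 𝒪-span of the standard basis), and define the reduced trace of z ∈ ℍ[K, d, π] to be the scalar z + star z = 2·(real part of z). Then the dual lattice of Λ with respect to the pairing (x, y) ↦ ψ(reduced trace of x · star y), namely the set {x ∈ ℍ[K, d, π] : ψ(2 · (x · star y).re) = 1 for all y ∈ Λ}, equals {π⁻¹ · (j · w) : w ∈ Λ}. -/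

import Mathlib

open scoped Quaternion

local notation "ℤₘ₀" => WithZero (Multiplicative ℤ)

/-!
The reduced-trace pairing is diagonal in the basis `1, i, j, k`:
`2·(x·y*).re = 2(x₀y₀ − d x₁y₁ − π x₂y₂ + dπ x₃y₃)`. Since `ψ` is trivial on `𝒪` but not on
`π⁻¹𝒪`, the dual of `𝒪⁴` under a diagonal pairing with coefficients `aᵢ` is `{x | v (aᵢxᵢ) ≤ 1}`.
As `2` and `d` are units, the dual of `Λ` is `{x | x₀, x₁, πx₂, πx₃ ∈ 𝒪}`, and this is `π⁻¹·j·Λ`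
because `π⁻¹·j·w = (w₂, −w₃, π⁻¹w₀, −π⁻¹w₁)`.
-/

open WithZero

section AddCharConductor

variable {K M : Type*} [Field K] [Monoid M] {v : Valuation K ℤₘ₀} {ψ : AddChar K M}

theorem Valuation.le_one_of_forall_addChar_mul_eq_one (hψ : ∃ a, v a = exp 1 ∧ ψ a ≠ 1)
    {c : K} (hc : ∀ t, v t ≤ 1 → ψ (c * t) = 1) : v c ≤ 1 := by
  obtain ⟨a, ha, hψa⟩ := hψ
  by_contra hc1
  have hexp : exp 1 ≤ v c := by
    rw [← not_lt, ← one_mul (exp 1), lt_mul_exp_iff_le one_ne_zero]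
    exact hc1
  have hc0 : c ≠ 0 := by
    rintro rfl
    simp at hexp
  apply hψa
  simpa [mul_div_cancel₀ a hc0] using
    hc (a / c) (by rw [map_div₀, ha]; exact div_le_one_of_le₀ hexp zero_le)

theorem Valuation.forall_addChar_sum_mul_eq_one_iff {ι : Type*} [Fintype ι] [DecidableEq ι]
    (hψ_triv : ∀ x, v x ≤ 1 → ψ x = 1) (hψ_nontriv : ∃ a, v a = exp 1 ∧ ψ a ≠ 1) (a : ι → K) :
    (∀ t : ι → K, (∀ i, v (t i) ≤ 1) → ψ (∑ i, a i * t i) = 1) ↔ ∀ i, v (a i) ≤ 1 := by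
  constructor
  · intro h i
    refine v.le_one_of_forall_addChar_mul_eq_one hψ_nontriv fun s hs => ?_
    have hsingle : ∀ j, v ((Pi.single i s : ι → K) j) ≤ 1 := fun j => by
      rcases eq_or_ne j i with rfl | hj <;> simp [*]
    simpa [Pi.single_apply, mul_ite] using h (Pi.single i s) hsingle
  · intro ha t ht
    refine hψ_triv _ (v.map_sum_le fun i _ => ?_)
    rw [map_mul]
    exact mul_le_one' (ha i) (ht i)

end AddCharConductor

namespace QuaternionAlgebra

theorem re_mul_star {R : Type*} [CommRing R] {c₁ c₂ : R} (x y : ℍ[R, c₁, c₂]) :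
    (x * star y).re =
      x.re * y.re - c₁ * x.imI * y.imI - c₂ * x.imJ * y.imJ + c₁ * c₂ * x.imK * y.imK := by
  simp only [re_mul, re_star, imI_star, imJ_star, imK_star]
  ring

theorem inv_smul_j_mul {K : Type*} [Field K] {c₁ c₂ : K} (hc₂ : c₂ ≠ 0) (w : ℍ[K, c₁, c₂]) :
    c₂⁻¹ • ((⟨0, 0, 1, 0⟩ : ℍ[K, c₁, c₂]) * w) =
      ⟨w.imJ, -w.imK, c₂⁻¹ * w.re, -(c₂⁻¹ * w.imI)⟩ := by
  ext <;> simp [inv_mul_cancel_left₀ hc₂]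

end QuaternionAlgebra

open QuaternionAlgebra

section DualLattice

variable {K M : Type*} [Field K] [Monoid M] {v : Valuation K ℤₘ₀} {ψ : AddChar K M} {c₁ c₂ : K}

theorem forall_addChar_two_mul_re_mul_star_eq_one_iff
    (hψ_triv : ∀ x, v x ≤ 1 → ψ x = 1) (hψ_nontriv : ∃ a, v a = exp 1 ∧ ψ a ≠ 1)
    (hc₁ : v c₁ = 1) (h2 : v (2 : K) = 1) (x : ℍ[K, c₁, c₂]) :
    (∀ y : ℍ[K, c₁, c₂], v y.re ≤ 1 ∧ v y.imI ≤ 1 ∧ v y.imJ ≤ 1 ∧ v y.imK ≤ 1 →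
        ψ (2 * (x * star y).re) = 1) ↔
      v x.re ≤ 1 ∧ v x.imI ≤ 1 ∧ v (c₂ * x.imJ) ≤ 1 ∧ v (c₂ * x.imK) ≤ 1 := by
  have hpairing : ∀ y : ℍ[K, c₁, c₂], 2 * (x * star y).re =
      ∑ i, ![2 * x.re, -(2 * c₁ * x.imI), -(2 * (c₂ * x.imJ)), 2 * c₁ * (c₂ * x.imK)] i *
        equivTuple c₁ 0 c₂ y i := by
    intro y
    simp only [re_mul_star, equivTuple_apply, Fin.sum_univ_four, Matrix.cons_val_zero,
      Matrix.cons_val_one, Matrix.cons_val]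
    ring
  simp only [hpairing, (equivTuple c₁ 0 c₂).forall_congr_left, Equiv.apply_symm_apply]
  refine (forall_congr' fun t => imp_congr_left ?_).trans
    ((v.forall_addChar_sum_mul_eq_one_iff hψ_triv hψ_nontriv _).trans ?_)
  · simp [Fin.forall_fin_succ]
  · simp [Fin.forall_fin_succ, hc₁, h2]

theorem exists_integral_eq_inv_smul_j_mul_iff (hc₂ : c₂ ≠ 0) (x : ℍ[K, c₁, c₂]) :
    (∃ w : ℍ[K, c₁, c₂], (v w.re ≤ 1 ∧ v w.imI ≤ 1 ∧ v w.imJ ≤ 1 ∧ v w.imK ≤ 1) ∧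
        x = c₂⁻¹ • ((⟨0, 0, 1, 0⟩ : ℍ[K, c₁, c₂]) * w)) ↔
      v x.re ≤ 1 ∧ v x.imI ≤ 1 ∧ v (c₂ * x.imJ) ≤ 1 ∧ v (c₂ * x.imK) ≤ 1 := by
  simp only [inv_smul_j_mul hc₂]
  constructor
  · rintro ⟨w, ⟨hre, hI, hJ, hK⟩, rfl⟩
    simp [*]
  · rintro ⟨hre, hI, hJ, hK⟩
    refine ⟨⟨c₂ * x.imJ, -(c₂ * x.imK), x.re, -x.imI⟩,
      ⟨hJ, by rwa [v.map_neg], hre, by rwa [v.map_neg]⟩, ?_⟩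
    ext <;> simp [inv_mul_cancel_left₀ hc₂]

end DualLattice

/-- Let `K` be a field with valuation `v : K → ℤₘ₀`, `d` a unit (`v d = 1`), `2` a unit
(`v 2 = 1`), `π` a uniformizer, and `ψ` an additive character of `K` of order zero
(trivial on the valuation ring, nontrivial on `π⁻¹·𝒪`). In `ℍ[K, d, π]`, let `Λ` be the
`𝒪`-span of the standard basis `1, i, j, k`. Then the dual lattice of `Λ` with respect to
the pairing `(x, y) ↦ ψ(trd(x · star y)) = ψ(2·(x·star y).re)` equals `π⁻¹ · (j · Λ)`. -/
theorem dual_lattice_eq_uniformizer_inv_mul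
    (K : Type*) [Field K] (v : Valuation K ℤₘ₀) (d π : K)
    (hd : v d = 1) (h2 : v (2 : K) = 1)
    (hπ : v π = (Multiplicative.ofAdd (-1 : ℤ) : Multiplicative ℤ))
    (ψ : AddChar K ℂ)
    (hψ_triv : ∀ x : K, v x ≤ 1 → ψ x = 1)
    (hψ_nontriv : ∃ a : K, v a = (Multiplicative.ofAdd (1 : ℤ) : Multiplicative ℤ) ∧ ψ a ≠ 1)
    (Λ : Set ℍ[K, d, π])
    (hΛ : Λ = {z : ℍ[K, d, π] | v z.re ≤ 1 ∧ v z.imI ≤ 1 ∧ v z.imJ ≤ 1 ∧ v z.imK ≤ 1}) :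
    {x : ℍ[K, d, π] | ∀ y ∈ Λ, ψ (2 * (x * star y).re) = 1}
      = {x : ℍ[K, d, π] | ∃ w ∈ Λ, x = π⁻¹ • ((⟨0, 0, 1, 0⟩ : ℍ[K, d, π]) * w)} := by
  have hπ0 : π ≠ 0 := by
    rintro rfl
    simp at hπ
  subst hΛ
  ext x
  exact (forall_addChar_two_mul_re_mul_star_eq_one_iff hψ_triv hψ_nontriv hd h2 x).trans
    (exists_integral_eq_inv_smul_j_mul_iff hπ0 x).symm
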